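/- The trace of A² composed with the Newton transformation satisfies Tr(A² T_r) = S₁·S_{r+1} − (r + 2)·S_{r+2}. -/
import Mathlib


open Finset

/-- The `r`-th elementary symmetric function of the values `κ 1, …, κ n`
(in particular it vanishes for `r > n`). -/
noncomputable def esymmVal {n : ℕ} (r : ℕ) (κ : Fin n → ℝ) : ℝ :=
  ∑ s ∈ Finset.univ.powersetCard r, ∏ i ∈ s, κ i

/-- esymm of `κ` restricted to the complement of `{i}`. -/
noncomputable def esymmValAway {n : ℕ} (r : ℕ) (κ : Fin n → ℝ) (i : Fin n) : ℝ :=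
  ∑ s ∈ (Finset.univ.erase i).powersetCard r, ∏ j ∈ s, κ j

lemma esymmValAway_zero {n : ℕ} (κ : Fin n → ℝ) (i : Fin n) :
    esymmValAway 0 κ i = 1 := by
  simp [esymmValAway]

/-- Splitting the `(r+1)`-st elementary symmetric function by whether the subset
contains `i`. -/
lemma esymmVal_split {n : ℕ} (r : ℕ) (κ : Fin n → ℝ) (i : Fin n) :
    esymmVal (r + 1) κ = esymmValAway (r + 1) κ i + κ i * esymmValAway r κ i := by
  classical
  have huniv : (Finset.univ : Finset (Fin n)) = insert i (Finset.univ.erase i) := by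
    simp
  have hnotmem : i ∉ (Finset.univ.erase i) := Finset.notMem_erase i _
  rw [esymmVal, huniv, Finset.powersetCard_succ_insert hnotmem,
    Finset.sum_union, Finset.sum_image]
  · rw [esymmValAway, esymmValAway, Finset.mul_sum]
    congr 1
    refine Finset.sum_congr rfl fun s hs => ?_
    have his : i ∉ s := fun h => hnotmem ((Finset.mem_powersetCard.1 hs).1 h)
    rw [Finset.prod_insert his]
  · intro s hs t ht hst
    have his : i ∉ s := fun h => hnotmem ((Finset.mem_powersetCard.1 hs).1 h)
    have hit : i ∉ t := fun h => hnotmem ((Finset.mem_powersetCard.1 ht).1 h)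
    have := congrArg (Finset.erase · i) hst
    simpa [Finset.erase_insert his, Finset.erase_insert hit] using this
  · rw [Finset.disjoint_left]
    intro s hs hs'
    obtain ⟨t, ht, hst⟩ := Finset.mem_image.1 hs'
    have his : i ∉ s := fun h => hnotmem ((Finset.mem_powersetCard.1 hs).1 h)
    exact his (hst ▸ Finset.mem_insert_self i t)

/-- `∑ i, κ i * e_k(κ away from i) = (k+1) * e_{k+1}(κ)`. -/
lemma sum_mul_esymmValAway {n : ℕ} (k : ℕ) (κ : Fin n → ℝ) :
    ∑ i, κ i * esymmValAway k κ i = ((k : ℝ) + 1) * esymmVal (k + 1) κ := by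
  classical
  have lhs_eq : ∑ i, κ i * esymmValAway k κ i
      = ∑ i, ∑ s ∈ (Finset.univ.erase i).powersetCard k, ∏ j ∈ insert i s, κ j := by
    refine Finset.sum_congr rfl fun i _ => ?_
    rw [esymmValAway, Finset.mul_sum]
    refine Finset.sum_congr rfl fun s hs => ?_
    have his : i ∉ s := fun h =>
      Finset.notMem_erase i _ ((Finset.mem_powersetCard.1 hs).1 h)
    rw [Finset.prod_insert his]
  have rhs_eq : ((k : ℝ) + 1) * esymmVal (k + 1) κ
      = ∑ t ∈ Finset.univ.powersetCard (k + 1), ∑ i ∈ t, ∏ j ∈ t, κ j := by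
    rw [esymmVal, Finset.mul_sum]
    refine Finset.sum_congr rfl fun t ht => ?_
    have hcard : t.card = k + 1 := (Finset.mem_powersetCard.1 ht).2
    rw [Finset.sum_const, hcard, nsmul_eq_mul]
    push_cast
    ring
  rw [lhs_eq, rhs_eq, Finset.sum_sigma', Finset.sum_sigma']
  refine Finset.sum_nbij' (fun p => ⟨insert p.1 p.2, p.1⟩)
    (fun p => ⟨p.2, p.1.erase p.2⟩) ?_ ?_ ?_ ?_ ?_
  · rintro ⟨i, s⟩ hp
    simp only [Finset.mem_sigma, Finset.mem_univ, true_and] at hp ⊢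
    obtain ⟨hsub, hcard⟩ := Finset.mem_powersetCard.1 hp
    have his : i ∉ s := fun h => Finset.notMem_erase i _ (hsub h)
    constructor
    · exact Finset.mem_powersetCard.2 ⟨Finset.subset_univ _,
        by rw [Finset.card_insert_of_notMem his, hcard]⟩
    · exact Finset.mem_insert_self i s
  · rintro ⟨t, i⟩ hp
    simp only [Finset.mem_sigma, Finset.mem_univ, true_and] at hp ⊢
    obtain ⟨ht, hi⟩ := hp
    have hcard := (Finset.mem_powersetCard.1 ht).2
    refine Finset.mem_powersetCard.2 ⟨?_, ?_⟩
    · intro j hj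
      exact Finset.mem_erase.2 ⟨(Finset.mem_erase.1 hj).1, Finset.mem_univ j⟩
    · rw [Finset.card_erase_of_mem hi, hcard]; omega
  · rintro ⟨i, s⟩ hp
    simp only [Finset.mem_sigma, Finset.mem_univ, true_and] at hp
    have hsub := (Finset.mem_powersetCard.1 hp).1
    have his : i ∉ s := fun h => Finset.notMem_erase i _ (hsub h)
    simp [Finset.erase_insert his]
  · rintro ⟨t, i⟩ hp
    simp only [Finset.mem_sigma, Finset.mem_univ, true_and] at hp
    simp [Finset.insert_erase hp.2]
  · rintro ⟨i, s⟩ hp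
    rfl

lemma esymmVal_one {n : ℕ} (κ : Fin n → ℝ) : esymmVal 1 κ = ∑ i, κ i := by
  have := sum_mul_esymmValAway 0 κ
  simp [esymmValAway_zero] at this
  linarith [this]

/-- The trace of `A²` composed with the Newton transformation satisfies
`Tr (A² ∘ T r) = S 1 * S (r + 1) - (r + 2) * S (r + 2)`. -/
theorem newton_transformation_trace_sq_comp
    {V : Type*} [NormedAddCommGroup V] [InnerProductSpace ℝ V] [FiniteDimensional ℝ V]
    {n : ℕ} (hn : Module.finrank ℝ V = n)
    (A : V →ₗ[ℝ] V) (hA : IsSelfAdjoint A)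
    (e : OrthonormalBasis (Fin n) ℝ V) (κ : Fin n → ℝ)
    (heig : ∀ i, A (e i) = κ i • e i)
    (T : ℕ → (V →ₗ[ℝ] V))
    (hT0 : T 0 = LinearMap.id)
    (hTrec : ∀ r, T (r + 1) = esymmVal (r + 1) κ • LinearMap.id - A ∘ₗ T r) :
    ∀ r, LinearMap.trace ℝ V (A ∘ₗ A ∘ₗ T r) =
      esymmVal 1 κ * esymmVal (r + 1) κ - ((r : ℝ) + 2) * esymmVal (r + 2) κ := by
  classical
  -- T r acts on e i by the scalar esymmValAway r κ i
  have hTe : ∀ r i, T r (e i) = esymmValAway r κ i • e i := by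
    intro r
    induction r with
    | zero => intro i; simp [hT0, esymmValAway_zero]
    | succ r ih =>
      intro i
      rw [hTrec r]
      simp only [LinearMap.sub_apply, LinearMap.smul_apply, LinearMap.id_coe, id_eq,
        LinearMap.comp_apply, ih i, map_smul, heig i, smul_smul]
      rw [esymmVal_split r κ i, add_smul, mul_comm]
      abel
  intro r
  -- compute (A ∘ A ∘ T r) (e i)
  have happ : ∀ i, (A ∘ₗ A ∘ₗ T r) (e i) = (κ i * κ i * esymmValAway r κ i) • e i := by
    intro i
    simp only [LinearMap.comp_apply, hTe r i, map_smul, heig i, smul_smul]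
    ring_nf
  -- trace via the basis
  have htr : LinearMap.trace ℝ V (A ∘ₗ A ∘ₗ T r)
      = ∑ i, κ i * κ i * esymmValAway r κ i := by
    rw [LinearMap.trace_eq_matrix_trace ℝ e.toBasis, Matrix.trace]
    refine Finset.sum_congr rfl fun i _ => ?_
    rw [Matrix.diag_apply, LinearMap.toMatrix_apply]
    simp [happ i, OrthonormalBasis.coe_toBasis]
  rw [htr]
  -- combinatorics
  have hsplit : ∀ i, κ i * κ i * esymmValAway r κ i
      = κ i * esymmVal (r + 1) κ - κ i * esymmValAway (r + 1) κ i := by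
    intro i
    rw [esymmVal_split r κ i]
    ring
  rw [Finset.sum_congr rfl fun i _ => hsplit i, Finset.sum_sub_distrib,
    ← Finset.sum_mul, sum_mul_esymmValAway (r + 1) κ, ← esymmVal_one κ]
  push_cast
  ring_nf
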